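/- arXiv:1504.02814 — 2 statements merged into one kernel-verified Lean document; each statement's English description precedes it below -/
import Mathlib

section
/- Let X be a set, let σ : X → X be an involution (σ ∘ σ = id), and let ρ : X → X be a bijection of order exactly 4 commuting with σ. Let P ∈ X satisfy σ(P) = ρ(P) and σ(P) ≠ P. Then for every integer k, if the map φ = ρ^k satisfies the cocycle condition φ ∘ (σ ∘ φ ∘ σ) = id, then φ(σ(P)) ≠ P. -/
theorem stmt_12 (X : Type*) (σ ρ : Equiv.Perm X)
    (hσ : σ * σ = 1) (hρ : orderOf ρ = 4) (hcomm : ρ * σ = σ * ρ)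
    (P : X) (hP : σ P = ρ P) (hP' : σ P ≠ P) (k : ℤ) :
    (ρ ^ k) * (σ * (ρ ^ k) * σ) = 1 → (ρ ^ k) (σ P) ≠ P := by
  intro hcoc
  have hc : Commute ρ σ := hcomm
  have hck : Commute (ρ ^ k) σ := hc.zpow_left k
  -- cocycle collapses to ρ^(2k) = 1
  have h2k : ρ ^ (2 * k) = 1 := by
    have e : ρ ^ k * (σ * ρ ^ k * σ) = ρ ^ (2 * k) := by
      rw [← hck.eq, mul_assoc (ρ ^ k) σ σ, hσ, mul_one, ← zpow_add, two_mul]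
    rw [← e]; exact hcoc
  -- hence k is even
  have hdvd : (4 : ℤ) ∣ 2 * k := by
    have := orderOf_dvd_iff_zpow_eq_one.mpr h2k
    rwa [hρ] at this
  obtain ⟨m, hm⟩ : (2 : ℤ) ∣ k := by omega
  -- ρ² P = P
  have hρ2 : ρ (ρ P) = P := by
    have : σ (σ P) = P := by
      have := congrArg (fun f : Equiv.Perm X => f P) hσ
      simpa using this
    calc ρ (ρ P) = ρ (σ P) := by rw [hP]
    _ = σ (ρ P) := by
        have := congrArg (fun f : Equiv.Perm X => f P) hcomm
        simpa using this
    _ = σ (σ P) := by rw [hP]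
    _ = P := this
  have hρ2' : (ρ ^ (2 : ℤ)) P = P := by
    show (ρ ^ (2 : ℤ)) P = P
    rw [show (2:ℤ) = 1 + 1 by ring, zpow_add, zpow_one]
    simpa using hρ2
  have hkP : (ρ ^ k) P = P := by
    have h2 : (ρ ^ (2:ℤ)) ∈ MulAction.stabilizer (Equiv.Perm X) P := hρ2'
    have hmem := Subgroup.zpow_mem _ h2 m
    rw [hm, zpow_mul]
    exact hmem
  rw [hP]
  have : (ρ ^ k) (ρ P) = ρ P := by
    have := (hc.zpow_left k).eq
    calc (ρ ^ k) (ρ P) = ((ρ ^ k) * ρ) P := rfl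
    _ = (ρ * ρ ^ k) P := by rw [((Commute.refl ρ).zpow_left k).eq]
    _ = ρ ((ρ ^ k) P) := rfl
    _ = ρ P := by rw [hkP]
  rw [this, ← hP]
  exact hP'
end

section
/- Let p be a prime and let R be a commutative ring of characteristic p. Fix x ∈ R and an integer N ≥ 1, and set s = Σ_{n=1}^{N} x^{p^N − p^{N−n}}. Then s^p − s · x^{(p−1)·p^N} = x^{(p−1)·p^N} − x^{p^{N+1} − 1}. -/
/-!
Writing `s = ∑_{i<N} x^(p^N - p^i)`, Frobenius is additive, so `s^p = ∑_{i<N} x^(p^(N+1) - p^(i+1))`,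
while `s · x^(p^(N+1) - p^N) = ∑_{i<N} x^(p^(N+1) - p^i)`. The difference telescopes to the first
and last terms `x^(p^(N+1) - p^N) - x^(p^(N+1) - 1)`.
-/

open Finset

lemma Finset.sum_Icc_one_sub_eq_sum_range {M : Type*} [AddCommMonoid M] (f : ℕ → M) (N : ℕ) :
    ∑ n ∈ Icc 1 N, f (N - n) = ∑ i ∈ range N, f i := by
  rw [← Ico_add_one_right_eq_Icc, sum_Ico_reflect f 1 le_rfl, range_eq_Ico]
  simp

section ArtinSchreier

variable {R : Type*} [CommRing R] {p : ℕ} [ExpChar R p] (x : R) (N : ℕ)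

lemma pow_expChar_sum_pow_pow_sub_pow :
    (∑ i ∈ range N, x ^ (p ^ N - p ^ i)) ^ p = ∑ i ∈ range N, x ^ (p ^ (N + 1) - p ^ (i + 1)) := by
  rw [sum_pow_char]
  refine sum_congr rfl fun i _ ↦ ?_
  rw [← pow_mul, Nat.sub_mul, ← pow_succ, ← pow_succ]

lemma sum_pow_pow_sub_pow_mul :
    (∑ i ∈ range N, x ^ (p ^ N - p ^ i)) * x ^ (p ^ (N + 1) - p ^ N) =
      ∑ i ∈ range N, x ^ (p ^ (N + 1) - p ^ i) := by
  rw [sum_mul]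
  refine sum_congr rfl fun i hi ↦ ?_
  have hp : 1 ≤ p := expChar_pos R p
  rw [← pow_add, add_comm, Nat.sub_add_sub_cancel (Nat.pow_le_pow_right hp (Nat.le_succ N))
    (Nat.pow_le_pow_right hp (mem_range.mp hi).le)]

theorem artinSchreier_truncation_identity :
    (∑ i ∈ range N, x ^ (p ^ N - p ^ i)) ^ p -
        (∑ i ∈ range N, x ^ (p ^ N - p ^ i)) * x ^ (p ^ (N + 1) - p ^ N) =
      x ^ (p ^ (N + 1) - p ^ N) - x ^ (p ^ (N + 1) - 1) := by
  rw [pow_expChar_sum_pow_pow_sub_pow, sum_pow_pow_sub_pow_mul, ← sum_sub_distrib,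
    sum_range_sub (fun i ↦ x ^ (p ^ (N + 1) - p ^ i)), pow_zero]

end ArtinSchreier

theorem stmt_15_general (p : ℕ) (hp : p.Prime) (R : Type*) [CommRing R] [CharP R p]
    (x : R) (N : ℕ)
    (s : R) (hs : s = ∑ n ∈ Finset.Icc 1 N, x ^ (p ^ N - p ^ (N - n))) :
    s ^ p - s * x ^ ((p - 1) * p ^ N) = x ^ ((p - 1) * p ^ N) - x ^ (p ^ (N + 1) - 1) := by
  have : Fact p.Prime := ⟨hp⟩
  rw [Nat.sub_one_mul, ← pow_succ', hs, sum_Icc_one_sub_eq_sum_range (fun i ↦ x ^ (p ^ N - p ^ i))]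
  exact artinSchreier_truncation_identity x N

theorem stmt_15 (p : ℕ) (hp : p.Prime) (R : Type*) [CommRing R] [CharP R p]
    (x : R) (N : ℕ) (hN : 1 ≤ N)
    (s : R) (hs : s = ∑ n ∈ Finset.Icc 1 N, x ^ (p ^ N - p ^ (N - n))) :
    s ^ p - s * x ^ ((p - 1) * p ^ N) = x ^ ((p - 1) * p ^ N) - x ^ (p ^ (N + 1) - 1) :=
  stmt_15_general p hp R x N s hs
end
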